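/- Let N ≥ 2 and let Λ = {ℓ, ℓ+1, …, r} be a contiguous segment with ℓ < r (no wrap-around). Then the truncated imaginary-hopping operator H_{ImHop,Λ} := (i/2) Σ_{j=ℓ}^{r−1} (s_j† s_{j+1} − s_{j+1}† s_j) satisfies H_{ImHop,Λ} |W⟩ = (i/2)(n_ℓ − n_r) |W⟩, where n_j = s_j† s_j. -/

import Mathlib

open scoped BigOperators

noncomputable section

/-- Configurations of `N` qubits. -/
abbrev Cfg (N : ℕ) := Fin N → Fin 2

/-- The `N`-qubit Hilbert space `⊗_{j=1}^N ℂ²`, identified with `ℂ^(Fin N → Fin 2)`. -/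
abbrev QS (N : ℕ) := EuclideanSpace ℂ (Cfg N)

/-- Computational basis state `|t⟩`. -/
def ket {N : ℕ} (t : Cfg N) : QS N := EuclideanSpace.single t 1

/-- Configuration with a single `1` at site `j`. -/
def eConf {N : ℕ} (j : Fin N) : Cfg N := fun k => if k = j then 1 else 0

/-- The all-zero product state `|0̄⟩`. -/
def zeroKet (N : ℕ) : QS N := ket (fun _ => 0)

/-- The W state `|W⟩ = (1/√N) ∑_j |e_j⟩`. -/
def Wst (N : ℕ) : QS N := (Real.sqrt N : ℂ)⁻¹ • ∑ j : Fin N, ket (eConf j)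

/-- Hard-core boson creation operator `s_j† = |1⟩⟨0|` acting at site `j`. -/
def aDag {N : ℕ} (j : Fin N) : QS N →ₗ[ℂ] QS N where
  toFun ψ := WithLp.toLp 2 (fun s => if s j = 1 then ψ (Function.update s j 0) else 0)
  map_add' ψ φ := by ext s; by_cases h : s j = 1 <;> simp [h]
  map_smul' c ψ := by ext s; by_cases h : s j = 1 <;> simp [h]

/-- Hard-core boson annihilation operator `s_j = |0⟩⟨1|` acting at site `j`. -/
def aOp {N : ℕ} (j : Fin N) : QS N →ₗ[ℂ] QS N where
  toFun ψ := WithLp.toLp 2 (fun s => if s j = 0 then ψ (Function.update s j 1) else 0)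
  map_add' ψ φ := by ext s; by_cases h : s j = 0 <;> simp [h]
  map_smul' c ψ := by ext s; by_cases h : s j = 0 <;> simp [h]

/-- Number operator `n_j = s_j† s_j = |1⟩⟨1|_j`. -/
def nOp {N : ℕ} (j : Fin N) : QS N →ₗ[ℂ] QS N := aDag j ∘ₗ aOp j

/-- The imaginary-hopping Hamiltonian
`H_ImHop = (i/2) ∑_{j=1}^N (s_j† s_{j+1} − s_{j+1}† s_j)` on the periodic chain. -/
def HImHop (N : ℕ) [NeZero N] : QS N →ₗ[ℂ] QS N :=
  (Complex.I / 2) • ∑ j : Fin N, (aDag j ∘ₗ aOp (j + 1) - aDag (j + 1) ∘ₗ aOp j)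

/-! Since `s_k |W⟩ = |0̄⟩/√N` for every `k`, each hopping term `s_j† s_k` sends `|W⟩` to
`|e_j⟩/√N` whatever `k` is. The truncated sum therefore telescopes to
`(|e_ℓ⟩ - |e_r⟩)/√N`, which is `n_ℓ |W⟩ - n_r |W⟩`. -/

lemma ket_apply {N : ℕ} (t s : Cfg N) : ket t s = if s = t then 1 else 0 :=
  PiLp.single_apply 2 ℂ t 1 s

lemma aOp_ket {N : ℕ} (j : Fin N) (t : Cfg N) :
    aOp j (ket t) = if t j = 1 then ket (Function.update t j 0) else 0 := by
  ext s
  change (if s j = 0 then ket t (Function.update s j 1) else 0) = _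
  by_cases ht : t j = 1 <;>
    simp [ket_apply, ht, Function.eq_update_iff, eq_comm, ite_and]

lemma aDag_ket {N : ℕ} (j : Fin N) (t : Cfg N) :
    aDag j (ket t) = if t j = 0 then ket (Function.update t j 1) else 0 := by
  ext s
  change (if s j = 1 then ket t (Function.update s j 0) else 0) = _
  by_cases ht : t j = 0 <;>
    simp [ket_apply, ht, Function.eq_update_iff, eq_comm, ite_and]

lemma aOp_ket_eConf {N : ℕ} (j k : Fin N) :
    aOp j (ket (eConf k)) = if j = k then zeroKet N else 0 := by
  by_cases hjk : j = k
  · subst hjk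
    have : Function.update (eConf j) j 0 = fun _ => 0 := by
      funext x; by_cases hx : x = j <;> simp [eConf, hx]
    simp [aOp_ket, eConf, zeroKet, this]
  · simp [aOp_ket, eConf, hjk]

lemma aDag_zeroKet {N : ℕ} (j : Fin N) : aDag j (zeroKet N) = ket (eConf j) := by
  have : Function.update (fun _ : Fin N => (0 : Fin 2)) j 1 = eConf j := by
    funext x; simp [Function.update_apply, eConf]
  simp [zeroKet, aDag_ket, this]

lemma aDag_comp_aOp_Wst {N : ℕ} (j k : Fin N) :
    (aDag j ∘ₗ aOp k) (Wst N) = (Real.sqrt N : ℂ)⁻¹ • ket (eConf j) := by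
  rw [LinearMap.comp_apply, Wst, map_smul, map_smul, map_sum]
  simp [aOp_ket_eConf, aDag_zeroKet]

lemma Fin.sum_ite_sub_add_one {M : Type*} [AddCommGroup M] {N : ℕ} [NeZero N]
    (f : Fin N → M) {ℓ r : Fin N} (h : ℓ ≤ r) :
    ∑ j, (if ℓ ≤ j ∧ j < r then f j - f (j + 1) else 0) = f ℓ - f r := by
  set g : ℕ → M := fun i => if hi : i < N then f ⟨i, hi⟩ else 0
  have hterm (j : Fin N) : (if ℓ ≤ j ∧ j < r then f j - f (j + 1) else 0)
      = if j.val ∈ Finset.Ico ℓ.val r.val then g j - g (j + 1) else 0 := by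
    by_cases hj : ℓ ≤ j ∧ j < r
    · -- `j + 1` does not wrap around, as `j < r < N`.
      have hsucc : (j + 1).val = j.val + 1 := Fin.val_add_one_of_lt' (by omega)
      have hg : g (j + 1) = f (j + 1) := by
        simp only [g, ← hsucc, Fin.is_lt, dif_pos]
      have hj' : j.val ∈ Finset.Ico ℓ.val r.val := Finset.mem_Ico.2 hj
      rw [if_pos hj, if_pos hj', hg]
      simp [g]
    · have hj' : j.val ∉ Finset.Ico ℓ.val r.val := fun hmem => hj (Finset.mem_Ico.1 hmem :)
      rw [if_neg hj, if_neg hj']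
  have hIco :
      (Finset.range N).filter (· ∈ Finset.Ico ℓ.val r.val) = Finset.Ico ℓ.val r.val := by
    ext i; simp only [Finset.mem_filter, Finset.mem_range, Finset.mem_Ico]; omega
  have telescope : ∑ i ∈ Finset.Ico ℓ.val r.val, (g i - g (i + 1)) = g ℓ - g r := by
    rw [← neg_sub (g r), ← Finset.sum_Ico_sub g h, ← Finset.sum_neg_distrib]
    simp only [neg_sub]
  rw [Finset.sum_congr rfl (fun j _ => hterm j), Fin.sum_univ_eq_sum_range
    (fun i => if i ∈ Finset.Ico ℓ.val r.val then g i - g (i + 1) else 0), ← Finset.sum_filter,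
    hIco, telescope]
  simp [g]

theorem truncated_HImHop_boundary_action_general (N : ℕ) [NeZero N]
    (ℓ r : Fin N) (hlr : ℓ < r) :
    ((Complex.I / 2) •
        ∑ j : Fin N,
          if ℓ ≤ j ∧ j < r then aDag j ∘ₗ aOp (j + 1) - aDag (j + 1) ∘ₗ aOp j else 0)
      (Wst N)
    = ((Complex.I / 2) • (nOp ℓ - nOp r)) (Wst N) := by
  have hop (j : Fin N) :
      (if ℓ ≤ j ∧ j < r then aDag j ∘ₗ aOp (j + 1) - aDag (j + 1) ∘ₗ aOp j else 0) (Wst N)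
        = if ℓ ≤ j ∧ j < r then (Real.sqrt N : ℂ)⁻¹ • ket (eConf j)
            - (Real.sqrt N : ℂ)⁻¹ • ket (eConf (j + 1)) else 0 := by
    split_ifs <;> simp [aDag_comp_aOp_Wst]
  rw [LinearMap.smul_apply, LinearMap.sum_apply, Finset.sum_congr rfl (fun j _ => hop j),
    Fin.sum_ite_sub_add_one (fun j => (Real.sqrt N : ℂ)⁻¹ • ket (eConf j)) hlr.le]
  simp [nOp, aDag_comp_aOp_Wst]

/-- For a contiguous segment `Λ = {ℓ,…,r}` (no wrap-around), the truncated
imaginary-hopping operator `H_{ImHop,Λ} = (i/2) ∑_{j=ℓ}^{r−1} (s_j† s_{j+1} − s_{j+1}† s_j)`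
acts on the W state as the boundary operator `(i/2)(n_ℓ − n_r)`. -/
theorem truncated_HImHop_boundary_action (N : ℕ) [NeZero N] (hN : 2 ≤ N)
    (ℓ r : Fin N) (hlr : ℓ < r) :
    ((Complex.I / 2) •
        ∑ j : Fin N,
          if ℓ ≤ j ∧ j < r then aDag j ∘ₗ aOp (j + 1) - aDag (j + 1) ∘ₗ aOp j else 0)
      (Wst N)
    = ((Complex.I / 2) • (nOp ℓ - nOp r)) (Wst N) :=
  truncated_HImHop_boundary_action_general N ℓ r hlr

end
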